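/- arXiv:1410.3234 — 2 statements merged into one kernel-verified Lean document; each statement's English description precedes it below -/
import Mathlib

section
/- If a vector t ∈ Θ satisfies t_s + Σ_{r≠s} t_{s,r} x_r = 0 for every site s ∈ S and every binary vector x ∈ B, then t = 0. Equivalently, if ⟨A(s,x), t⟩ = 0 for all s ∈ S and all x ∈ B, then t = 0. -/
open scoped BigOperators RealInnerProductSpace Classical
open Finset

/-- Binary vectors of length `L`. -/
abbrev BinVec (L : ℕ) := Fin L → Bool

/-- Real value (0 or 1) of the `s`-th coordinate of a binary vector. -/
def bval {L : ℕ} (x : BinVec L) (s : Fin L) : ℝ := if x s then 1 else 0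

/-- Index set for the parameter space: pairs `s ≤ t`; the diagonal `(s,s)` codes `θ_s`,
off-diagonal `(s,t)` with `s < t` codes `θ_{s,t}`.  Cardinality `L(L+1)/2`. -/
abbrev Idx (L : ℕ) := {p : Fin L × Fin L // p.1 ≤ p.2}

/-- The parameter space `Θ`, with its Euclidean norm and inner product. -/
abbrev Theta (L : ℕ) := EuclideanSpace ℝ (Idx L)

/-- Symmetrized coordinate access: `coordOf θ s s = θ_s`, and `coordOf θ s t = θ_{s,t} = θ_{t,s}`. -/
def coordOf {L : ℕ} (θ : Theta L) (s t : Fin L) : ℝ :=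
  if h : s ≤ t then θ ⟨(s, t), h⟩ else θ ⟨(t, s), le_of_not_ge h⟩

/-- The statistics vector `U(x) ∈ Θ`, with `U_s(x) = x_s` and `U_{s,t}(x) = x_s x_t`. -/
noncomputable def U {L : ℕ} (x : BinVec L) : Theta L :=
  (EuclideanSpace.equiv (Idx L) ℝ).symm fun i => bval x i.1.1 * bval x i.1.2

/-- Partition function `Z(θ)`. -/
noncomputable def Zfun {L : ℕ} (θ : Theta L) : ℝ :=
  ∑ y : BinVec L, Real.exp (-⟪θ, U y⟫)

/-- The autologistic distribution `π_θ`. -/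
noncomputable def piA {L : ℕ} (θ : Theta L) (x : BinVec L) : ℝ :=
  Real.exp (-⟪θ, U x⟫) / Zfun θ

/-- `a_{s,x}(T) = −(T_s + Σ_{r≠s} T_{s,r} x_r)`. -/
noncomputable def aFun {L : ℕ} (s : Fin L) (x : BinVec L) (T : Theta L) : ℝ :=
  -(coordOf T s s + ∑ r ∈ Finset.univ.erase s, coordOf T s r * bval x r)

/-- The vector `A(s,x) ∈ Θ` with `A_s(s,x) = −1`, `A_{s,r}(s,x) = −x_r` for `r ≠ s`,
all other coordinates `0`. -/
noncomputable def Avec {L : ℕ} (s : Fin L) (x : BinVec L) : Theta L :=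
  (EuclideanSpace.equiv (Idx L) ℝ).symm fun i =>
    if i.1.1 = s ∧ i.1.2 = s then -1
    else if i.1.1 = s then -(bval x i.1.2)
    else if i.1.2 = s then -(bval x i.1.1)
    else 0

/-- `g(z) = 1/(1+e^z)`. -/
noncomputable def gfun (z : ℝ) : ℝ := 1 / (1 + Real.exp z)

/-- `h(z) = e^z/(1+e^z)`. -/
noncomputable def hfun (z : ℝ) : ℝ := Real.exp z / (1 + Real.exp z)

/-- Local log pseudo-likelihood `LPL_{s,x}(T)`. -/
noncomputable def LPLs {L : ℕ} (s : Fin L) (x : BinVec L) (T : Theta L) : ℝ :=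
  bval x s * aFun s x T + Real.log (gfun (aFun s x T))

/-- Log pseudo-likelihood `LPL(x,T) = Σ_s LPL_{s,x}(T)`. -/
noncomputable def LPL {L : ℕ} (x : BinVec L) (T : Theta L) : ℝ := ∑ s, LPLs s x T

/-- Mean log pseudo-likelihood `g_θ(T)`. -/
noncomputable def gbar {L : ℕ} (θ T : Theta L) : ℝ := ∑ x : BinVec L, piA θ x * LPL x T

lemma sum_erase_mul_bval_false {L : ℕ} (c : Fin L → ℝ) (s : Fin L) :
    ∑ q ∈ univ.erase s, c q * bval (fun _ => false) q = 0 := by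
  simp [bval]

lemma sum_erase_mul_bval_indicator {L : ℕ} (c : Fin L → ℝ) {s r : Fin L} (hrs : r ≠ s) :
    ∑ q ∈ univ.erase s, c q * bval (fun i => decide (i = r)) q = c r := by
  simp [bval, hrs]

lemma eq_zero_of_coordOf_eq_zero {L : ℕ} {t : Theta L} (h : ∀ s r, coordOf t s r = 0) :
    t = 0 := by
  ext ⟨⟨s, r⟩, hsr⟩
  simpa [coordOf, hsr] using h s r

theorem stmt2_general (L : ℕ) (t : Theta L)
    (h : ∀ (s : Fin L) (x : BinVec L),
      coordOf t s s + ∑ r ∈ Finset.univ.erase s, coordOf t s r * bval x r = 0) :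
    t = 0 := by
  have hdiag : ∀ s, coordOf t s s = 0 := fun s => by
    simpa only [sum_erase_mul_bval_false, add_zero] using h s fun _ => false
  refine eq_zero_of_coordOf_eq_zero fun s r => ?_
  rcases eq_or_ne r s with rfl | hrs
  · exact hdiag r
  · simpa only [hdiag s, sum_erase_mul_bval_indicator _ hrs, zero_add] using
      h s fun i => decide (i = r)

/-- if `t_s + Σ_{r≠s} t_{s,r} x_r = 0` for every site `s` and every binary
vector `x`, then `t = 0`. -/
theorem stmt2 (L : ℕ) (hL : 1 ≤ L) (t : Theta L)
    (h : ∀ (s : Fin L) (x : BinVec L),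
      coordOf t s s + ∑ r ∈ Finset.univ.erase s, coordOf t s r * bval x r = 0) :
    t = 0 :=
  stmt2_general L t h
end

section
/- For every θ ∈ Θ, the mean log pseudo-likelihood T ↦ g_θ(T) is strictly concave on Θ: for all T, T' ∈ Θ with T ≠ T' and all λ ∈ (0,1), one has g_θ(λT + (1−λ)T') > λ·g_θ(T) + (1−λ)·g_θ(T'). -/
open scoped BigOperators RealInnerProductSpace Classical
open Finset

/-! Each `LPL_{s,x}` is the strictly concave function `z ↦ x_s z − log (1 + e^z)` of the linear
form `a_{s,x}`, and `g_θ` is a combination of these with positive weights `π_θ(x)`. Such a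
combination is strictly concave as soon as the forms `a_{s,x}` separate points of `Θ`, and they
do: `a_{s,0}(T) = −T_s`, and for `x` the indicator of `t ≠ s`, `a_{s,x}(T) = −T_s − T_{s,t}`. -/

open Set

lemma hasDerivAt_log_one_add_exp (z : ℝ) :
    HasDerivAt (fun z => Real.log (1 + Real.exp z)) (Real.exp z / (1 + Real.exp z)) z :=
  ((Real.hasDerivAt_exp z).const_add 1).log (by positivity)

lemma strictConvexOn_log_one_add_exp :
    StrictConvexOn ℝ univ fun z : ℝ => Real.log (1 + Real.exp z) := by
  apply StrictMonoOn.strictConvexOn_of_deriv convex_univ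
  · exact (continuous_const.add Real.continuous_exp).log
      (fun z => (add_pos one_pos (Real.exp_pos z)).ne') |>.continuousOn
  · rw [interior_univ, funext fun z => (hasDerivAt_log_one_add_exp z).deriv]
    intro a _ b _ hab
    have ha := Real.exp_pos a
    have hb := Real.exp_pos b
    rw [div_lt_div_iff₀ (by positivity) (by positivity)]
    nlinarith [Real.exp_lt_exp.2 hab]

lemma strictConcaveOn_mul_sub_log_one_add_exp (c : ℝ) :
    StrictConcaveOn ℝ univ fun z : ℝ => c * z - Real.log (1 + Real.exp z) :=
  ((LinearMap.mul ℝ ℝ c).concaveOn (convex_univ (𝕜 := ℝ))).add_strictConcaveOn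
    strictConvexOn_log_one_add_exp.neg

theorem StrictConcaveOn.sum_mul_comp_linearMap {ι E : Type*} [Fintype ι] [AddCommGroup E]
    [Module ℝ E] {w : ι → ℝ} (hw : ∀ i, 0 < w i) {φ : ι → ℝ → ℝ}
    (hφ : ∀ i, StrictConcaveOn ℝ univ (φ i)) {ℓ : ι → E →ₗ[ℝ] ℝ}
    (hℓ : Function.Injective (LinearMap.pi ℓ)) :
    StrictConcaveOn ℝ univ fun T => ∑ i, w i * φ i (ℓ i T) := by
  refine ⟨convex_univ, fun T _ T' _ hne a b ha hb hab => ?_⟩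
  obtain ⟨j, hj⟩ : ∃ j, ℓ j T ≠ ℓ j T' := by
    by_contra! h
    exact hne (hℓ (funext h))
  have hle : ∀ i, a * φ i (ℓ i T) + b * φ i (ℓ i T') ≤ φ i (ℓ i (a • T + b • T')) := by
    intro i
    simpa only [map_add, map_smul, smul_eq_mul] using
      (hφ i).concaveOn.2 (mem_univ _) (mem_univ _) ha.le hb.le hab
  have hlt : a * φ j (ℓ j T) + b * φ j (ℓ j T') < φ j (ℓ j (a • T + b • T')) := by
    simpa only [map_add, map_smul, smul_eq_mul] using
      (hφ j).2 (mem_univ _) (mem_univ _) hj ha hb hab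
  calc a • ∑ i, w i * φ i (ℓ i T) + b • ∑ i, w i * φ i (ℓ i T')
      = ∑ i, w i * (a * φ i (ℓ i T) + b * φ i (ℓ i T')) := by
        simp only [smul_eq_mul, mul_sum, ← sum_add_distrib]
        exact sum_congr rfl fun i _ => by ring
    _ < ∑ i, w i * φ i (ℓ i (a • T + b • T')) :=
        sum_lt_sum (fun i _ => mul_le_mul_of_nonneg_left (hle i) (hw i).le)
          ⟨j, mem_univ j, mul_lt_mul_of_pos_left hlt (hw j)⟩

variable {L : ℕ}

lemma coordOf_of_le (T : Theta L) {s t : Fin L} (h : s ≤ t) : coordOf T s t = T ⟨(s, t), h⟩ :=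
  dif_pos h

lemma coordOf_add (T T' : Theta L) (s t : Fin L) :
    coordOf (T + T') s t = coordOf T s t + coordOf T' s t := by
  unfold coordOf
  split <;> rfl

lemma coordOf_smul (c : ℝ) (T : Theta L) (s t : Fin L) :
    coordOf (c • T) s t = c * coordOf T s t := by
  unfold coordOf
  split <;> rfl

noncomputable def aLin (s : Fin L) (x : BinVec L) : Theta L →ₗ[ℝ] ℝ where
  toFun := aFun s x
  map_add' T T' := by
    simp only [aFun, coordOf_add, add_mul, sum_add_distrib]
    ring
  map_smul' c T := by
    simp only [aFun, coordOf_smul, mul_assoc, ← mul_sum, RingHom.id_apply, smul_eq_mul]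
    ring

lemma aLin_apply (s : Fin L) (x : BinVec L) (T : Theta L) : aLin s x T = aFun s x T := rfl

lemma aFun_false (s : Fin L) (T : Theta L) : aFun s (fun _ => false) T = -coordOf T s s := by
  simp [aFun, bval]

lemma aFun_indicator {s t : Fin L} (hst : s ≠ t) (T : Theta L) :
    aFun s (fun r => decide (r = t)) T = -(coordOf T s s + coordOf T s t) := by
  rw [aFun, sum_eq_single_of_mem t (mem_erase.2 ⟨hst.symm, mem_univ t⟩)]
  · simp [bval]
  · intro r _ hrt
    simp [bval, hrt]

lemma injective_pi_aLin :
    Function.Injective (LinearMap.pi fun p : Fin L × BinVec L => aLin p.1 p.2) := by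
  rw [← LinearMap.ker_eq_bot, LinearMap.ker_eq_bot']
  intro T hT
  have ha : ∀ s x, aFun s x T = 0 := fun s x => congr_fun hT (s, x)
  have hdiag : ∀ s, coordOf T s s = 0 := fun s => by
    simpa [aFun_false] using ha s fun _ => false
  ext ⟨⟨s, t⟩, hst⟩
  rw [PiLp.zero_apply, ← coordOf_of_le T hst]
  rcases eq_or_ne s t with rfl | hne
  · exact hdiag s
  · simpa [aFun_indicator hne, hdiag] using ha s fun r => decide (r = t)

lemma piA_pos (θ : Theta L) (x : BinVec L) : 0 < piA θ x :=
  div_pos (Real.exp_pos _) (sum_pos (fun _ _ => Real.exp_pos _) ⟨x, mem_univ x⟩)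

lemma LPLs_eq (s : Fin L) (x : BinVec L) (T : Theta L) :
    LPLs s x T = bval x s * aLin s x T - Real.log (1 + Real.exp (aLin s x T)) := by
  rw [LPLs, gfun, one_div, Real.log_inv, aLin_apply, sub_eq_add_neg]

lemma gbar_eq_sum (θ T : Theta L) :
    gbar θ T = ∑ p : Fin L × BinVec L, piA θ p.2 *
      (bval p.2 p.1 * aLin p.1 p.2 T - Real.log (1 + Real.exp (aLin p.1 p.2 T))) := by
  simp only [gbar, LPL, LPLs_eq, mul_sum, Fintype.sum_prod_type]
  exact sum_comm

theorem strictConcaveOn_gbar (θ : Theta L) : StrictConcaveOn ℝ univ (gbar θ) := by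
  have hw : ∀ p : Fin L × BinVec L, 0 < piA θ p.2 := fun p => piA_pos θ p.2
  have hφ : ∀ p : Fin L × BinVec L,
      StrictConcaveOn ℝ univ fun z => bval p.2 p.1 * z - Real.log (1 + Real.exp z) :=
    fun p => strictConcaveOn_mul_sub_log_one_add_exp _
  -- The general lemma sees `Θ` through its `Module` structure, `gbar` through `WithLp.instSMul`.
  convert StrictConcaveOn.sum_mul_comp_linearMap hw hφ injective_pi_aLin using 1
  · rfl
  · exact funext (gbar_eq_sum θ)

theorem stmt3_general (L : ℕ) (θ : Theta L) :
    ∀ T T' : Theta L, T ≠ T' → ∀ lam : ℝ, 0 < lam → lam < 1 →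
      lam * gbar θ T + (1 - lam) * gbar θ T' < gbar θ (lam • T + (1 - lam) • T') :=
  fun _ _ hne _ h0 h1 =>
    (strictConcaveOn_gbar θ).2 (mem_univ _) (mem_univ _) hne h0 (sub_pos.2 h1) (add_sub_cancel _ _)

/-- the mean log pseudo-likelihood `T ↦ g_θ(T)` is strictly concave on `Θ`. -/
theorem stmt3 (L : ℕ) (hL : 1 ≤ L) (θ : Theta L) :
    ∀ T T' : Theta L, T ≠ T' → ∀ lam : ℝ, 0 < lam → lam < 1 →
      lam * gbar θ T + (1 - lam) * gbar θ T' < gbar θ (lam • T + (1 - lam) • T') :=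
  stmt3_general L θ
end
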